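/- If the expert policy π^E of a Markov Game is a weak Dominant Strategy Equilibrium and a learned product policy π has behavioral cloning error at most ε_BC, then NashGap(π) ≤ 2n·ε_BC/(1−γ)². -/
import Mathlib


open scoped BigOperators

namespace MAIL

/-- An `n`-player Markov Game with finite state space `S` and finite
per-player action spaces `A i` (joint actions are dependent functions). -/
structure Game (n : ℕ) (S : Type) (A : Fin n → Type) [Fintype S] [∀ i, Fintype (A i)] where
  P : S → (∀ i, A i) → S → ℝ
  r : Fin n → S → (∀ i, A i) → ℝ
  ν₀ : S → ℝ
  γ : ℝ

variable {n : ℕ} {S : Type} {A : Fin n → Type} [Fintype S] [∀ i, Fintype (A i)]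

/-- A (per-player or joint) policy is a probability distribution over actions at each state. -/
def IsPol {B : Type} [Fintype B] (π : S → B → ℝ) : Prop :=
  (∀ s b, 0 ≤ π s b) ∧ ∀ s, ∑ b, π s b = 1

/-- Standard validity assumptions on a game: `γ ∈ [0,1)`, `ν₀` a distribution,
`P` a transition kernel, rewards bounded in `[-1,1]`. -/
def IsGame (G : Game n S A) : Prop :=
  0 ≤ G.γ ∧ G.γ < 1 ∧ (∀ s, 0 ≤ G.ν₀ s) ∧ (∑ s, G.ν₀ s = 1) ∧
    (∀ s a, (∀ s', 0 ≤ G.P s a s') ∧ ∑ s', G.P s a s' = 1) ∧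
    (∀ i s a, |G.r i s a| ≤ 1)

/-- Joint (product) policy induced by independent per-player policies. -/
def joint (π : ∀ i, S → A i → ℝ) : S → (∀ i, A i) → ℝ :=
  fun s a => ∏ i, π i s (a i)

/-- `stateDist G π t s = P(s_t = s)` when rolling out joint policy `π`. -/
def stateDist (G : Game n S A) (π : S → (∀ i, A i) → ℝ) : ℕ → S → ℝ
  | 0 => G.ν₀
  | t + 1 => fun s' => ∑ s : S, ∑ a : (∀ i, A i), stateDist G π t s * π s a * G.P s a s'

/-- Discounted state occupancy measure `μ_π(s) = (1-γ) ∑_t γ^t P(s_t = s)`. -/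
noncomputable def occ (G : Game n S A) (π : S → (∀ i, A i) → ℝ) (s : S) : ℝ :=
  (1 - G.γ) * ∑' t : ℕ, G.γ ^ t * stateDist G π t s

/-- State-action occupancy measure `ρ_π(s,a) = μ_π(s) π(a|s)`. -/
noncomputable def saOcc (G : Game n S A) (π : S → (∀ i, A i) → ℝ)
    (s : S) (a : ∀ i, A i) : ℝ :=
  occ G π s * π s a

/-- Player `i`'s value `V_i^π(ν₀) = (1/(1-γ)) E_{(s,a)∼ρ_π}[r_i(s,a)]`. -/
noncomputable def value (G : Game n S A) (i : Fin n) (π : S → (∀ i, A i) → ℝ) : ℝ :=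
  (1 / (1 - G.γ)) * ∑ s : S, ∑ a : (∀ i, A i), saOcc G π s a * G.r i s a

/-- Player `i`'s value started from the Dirac distribution at state `s`. -/
noncomputable def valueFrom [DecidableEq S] (G : Game n S A) (i : Fin n)
    (π : S → (∀ i, A i) → ℝ) (s₀ : S) : ℝ :=
  value { G with ν₀ := fun s => if s = s₀ then 1 else 0 } i π

/-- State-action value `Q_i^π(s,a) = r_i(s,a) + γ ∑_{s'} P(s'|s,a) V_i^π(s')`. -/
noncomputable def Qf [DecidableEq S] (G : Game n S A) (i : Fin n)
    (π : S → (∀ i, A i) → ℝ) (s : S) (a : ∀ i, A i) : ℝ :=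
  G.r i s a + G.γ * ∑ s' : S, G.P s a s' * valueFrom G i π s'

/-- Unilateral deviation: player `i` switches to `πi'`, the others keep `π`. -/
def dev (π : ∀ i, S → A i → ℝ) (i : Fin n) (πi' : S → A i → ℝ) :
    ∀ j, S → A j → ℝ :=
  Function.update π i πi'

/-- Behavioral-cloning error of player `i`:
`E_{s ∼ μ_{π^E}} ‖π_i(·|s) − π^E_i(·|s)‖₁`. -/
noncomputable def bcErr (G : Game n S A) (πE π : ∀ i, S → A i → ℝ) (i : Fin n) : ℝ :=
  ∑ s : S, occ G (joint πE) s * ∑ b : A i, |π i s b - πE i s b|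

end MAIL

-- Auxiliary lemmas
namespace MAIL
variable {n : ℕ} {S : Type} {A : Fin n → Type} [Fintype S] [∀ i, Fintype (A i)]

lemma sum_joint (f : ∀ i, A i → ℝ) :
    ∑ a : ∀ i, A i, ∏ i, f i (a i) = ∏ i, ∑ b, f i b := by
  rw [Finset.prod_univ_sum, Fintype.piFinset_univ]

lemma jointIsPol {π : ∀ i, S → A i → ℝ} (h : ∀ i, IsPol (π i)) : IsPol (joint π) := by
  refine ⟨fun s a => Finset.prod_nonneg fun i _ => (h i).1 s (a i), fun s => ?_⟩
  show ∑ a : ∀ i, A i, ∏ i, π i s (a i) = 1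
  rw [sum_joint]
  exact Finset.prod_eq_one fun i _ => (h i).2 s

variable (G : Game n S A)

lemma stateDist_nonneg (hG : IsGame G) {σ : S → (∀ i, A i) → ℝ} (hσ : IsPol σ) :
    ∀ t s, 0 ≤ stateDist G σ t s := by
  intro t
  induction t with
  | zero => exact hG.2.2.1
  | succ t ih =>
    intro s'
    apply Finset.sum_nonneg; intro s _
    apply Finset.sum_nonneg; intro a _
    exact mul_nonneg (mul_nonneg (ih s) (hσ.1 s a)) ((hG.2.2.2.2.1 s a).1 s')

lemma stateDist_sum_one (hG : IsGame G) {σ : S → (∀ i, A i) → ℝ} (hσ : IsPol σ) :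
    ∀ t, ∑ s, stateDist G σ t s = 1 := by
  intro t
  induction t with
  | zero => exact hG.2.2.2.1
  | succ t ih =>
    show ∑ s' : S, ∑ s : S, ∑ a : (∀ i, A i), stateDist G σ t s * σ s a * G.P s a s' = 1
    rw [Finset.sum_comm]
    have : ∀ s : S, ∑ s' : S, ∑ a : (∀ i, A i), stateDist G σ t s * σ s a * G.P s a s'
        = stateDist G σ t s := by
      intro s
      rw [Finset.sum_comm]
      calc ∑ a : (∀ i, A i), ∑ s' : S, stateDist G σ t s * σ s a * G.P s a s'
          = ∑ a : (∀ i, A i), stateDist G σ t s * σ s a := by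
            apply Finset.sum_congr rfl; intro a _
            rw [← Finset.mul_sum, (hG.2.2.2.2.1 s a).2, mul_one]
        _ = stateDist G σ t s := by rw [← Finset.mul_sum, hσ.2 s, mul_one]
    rw [Finset.sum_congr rfl fun s _ => this s, ih]

lemma stateDist_le_one (hG : IsGame G) {σ : S → (∀ i, A i) → ℝ} (hσ : IsPol σ) (t : ℕ) (s : S) :
    stateDist G σ t s ≤ 1 := by
  calc stateDist G σ t s ≤ ∑ s', stateDist G σ t s' :=
        Finset.single_le_sum (fun s' _ => stateDist_nonneg G hG hσ t s') (Finset.mem_univ s)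
    _ = 1 := stateDist_sum_one G hG hσ t

end MAIL
namespace MAIL
set_option linter.unusedSectionVars false
variable {n : ℕ} {S : Type} {A : Fin n → Type} [Fintype S] [∀ i, Fintype (A i)]
variable (G : Game n S A)

lemma summable_of_bound {u : ℕ → ℝ} (hG : IsGame G) (C : ℝ)
    (h0 : ∀ t, 0 ≤ u t) (h1 : ∀ t, u t ≤ C * G.γ ^ t) : Summable u := by
  refine Summable.of_nonneg_of_le h0 h1 ?_
  exact (summable_geometric_of_lt_one hG.1 hG.2.1).mul_left C

lemma summable_sd (hG : IsGame G) {σ : S → (∀ i, A i) → ℝ} (hσ : IsPol σ) (s : S) :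
    Summable (fun t => G.γ ^ t * stateDist G σ t s) := by
  refine summable_of_bound G hG 1 (fun t => mul_nonneg (pow_nonneg hG.1 t)
    (stateDist_nonneg G hG hσ t s)) (fun t => ?_)
  rw [one_mul]
  calc G.γ ^ t * stateDist G σ t s ≤ G.γ ^ t * 1 := by
        exact mul_le_mul_of_nonneg_left (stateDist_le_one G hG hσ t s) (pow_nonneg hG.1 t)
    _ = G.γ ^ t := mul_one _

lemma occ_nonneg (hG : IsGame G) {σ : S → (∀ i, A i) → ℝ} (hσ : IsPol σ) (s : S) :
    0 ≤ occ G σ s :=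
  mul_nonneg (by linarith [hG.2.1]) (tsum_nonneg fun t =>
    mul_nonneg (pow_nonneg hG.1 t) (stateDist_nonneg G hG hσ t s))

end MAIL
namespace MAIL
set_option linter.unusedSectionVars false
set_option maxHeartbeats 1000000
variable {n : ℕ} {S : Type} {A : Fin n → Type} [Fintype S] [∀ i, Fintype (A i)]
variable (G : Game n S A)

lemma occ_diff (hG : IsGame G) (σ σ' : S → (∀ i, A i) → ℝ) (hσ : IsPol σ) (hσ' : IsPol σ') :
    ∑ s, ∑ a, |saOcc G σ s a - saOcc G σ' s a| ≤
      (1 / (1 - G.γ)) * ∑ s, occ G σ' s * ∑ a, |σ s a - σ' s a| := by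
  have hγ0 := hG.1
  have hγ1 := hG.2.1
  have h1γ : 0 < 1 - G.γ := by linarith
  set γ := G.γ with hγdef
  set p : ℕ → S → ℝ := stateDist G σ with hp
  set p' : ℕ → S → ℝ := stateDist G σ' with hp'
  have hpn : ∀ t s, 0 ≤ p t s := stateDist_nonneg G hG hσ
  have hpn' : ∀ t s, 0 ≤ p' t s := stateDist_nonneg G hG hσ'
  have hp1 : ∀ t s, p t s ≤ 1 := stateDist_le_one G hG hσ
  have hp1' : ∀ t s, p' t s ≤ 1 := stateDist_le_one G hG hσ'
  have hps' : ∀ t, ∑ s, p' t s = 1 := stateDist_sum_one G hG hσ'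
  set eps : S → ℝ := fun s => ∑ a, |σ s a - σ' s a| with heps
  have heps0 : ∀ s, 0 ≤ eps s := fun s => Finset.sum_nonneg fun a _ => abs_nonneg _
  have heps2 : ∀ s, eps s ≤ 2 := by
    intro s
    calc eps s ≤ ∑ a, (σ s a + σ' s a) := by
          apply Finset.sum_le_sum; intro a _
          calc |σ s a - σ' s a| ≤ |σ s a| + |σ' s a| := abs_sub _ _
            _ = σ s a + σ' s a := by
                rw [abs_of_nonneg (hσ.1 s a), abs_of_nonneg (hσ'.1 s a)]
      _ = 2 := by rw [Finset.sum_add_distrib, hσ.2 s, hσ'.2 s]; norm_num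
  set Am : ℕ → ℝ := fun t => ∑ s, ∑ a, |p t s * σ s a - p' t s * σ' s a| with hAm
  set e : ℕ → ℝ := fun t => ∑ s, p' t s * eps s with he
  set d : ℕ → ℝ := fun t => ∑ s, |p t s - p' t s| with hd
  have he0 : ∀ t, 0 ≤ e t := fun t =>
    Finset.sum_nonneg fun s _ => mul_nonneg (hpn' t s) (heps0 s)
  have he2 : ∀ t, e t ≤ 2 := by
    intro t
    calc e t ≤ ∑ s, p' t s * 2 := Finset.sum_le_sum fun s _ =>
          mul_le_mul_of_nonneg_left (heps2 s) (hpn' t s)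
      _ = 2 := by rw [← Finset.sum_mul, hps' t]; norm_num
  have hA0 : ∀ t, 0 ≤ Am t := fun t => Finset.sum_nonneg fun s _ =>
    Finset.sum_nonneg fun a _ => abs_nonneg _
  have claimA : ∀ t, Am t ≤ d t + e t := by
    intro t
    have : ∀ s, ∑ a, |p t s * σ s a - p' t s * σ' s a| ≤ |p t s - p' t s| + p' t s * eps s := by
      intro s
      calc ∑ a, |p t s * σ s a - p' t s * σ' s a|
          ≤ ∑ a, (|p t s - p' t s| * σ s a + p' t s * |σ s a - σ' s a|) := by
            apply Finset.sum_le_sum; intro a _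
            have : p t s * σ s a - p' t s * σ' s a
                = (p t s - p' t s) * σ s a + p' t s * (σ s a - σ' s a) := by ring
            rw [this]
            calc |(p t s - p' t s) * σ s a + p' t s * (σ s a - σ' s a)|
                ≤ |(p t s - p' t s) * σ s a| + |p' t s * (σ s a - σ' s a)| := abs_add_le _ _
              _ = |p t s - p' t s| * σ s a + p' t s * |σ s a - σ' s a| := by
                  rw [abs_mul, abs_mul, abs_of_nonneg (hσ.1 s a), abs_of_nonneg (hpn' t s)]
        _ = |p t s - p' t s| + p' t s * eps s := by
            rw [Finset.sum_add_distrib, ← Finset.mul_sum, ← Finset.mul_sum, hσ.2 s, mul_one]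
    calc Am t ≤ ∑ s, (|p t s - p' t s| + p' t s * eps s) := Finset.sum_le_sum fun s _ => this s
      _ = d t + e t := Finset.sum_add_distrib
  have claimB : ∀ t, d (t + 1) ≤ Am t := by
    intro t
    have hrw : ∀ s' : S, p (t+1) s' - p' (t+1) s'
        = ∑ s, ∑ a, (p t s * σ s a - p' t s * σ' s a) * G.P s a s' := by
      intro s'
      show (∑ s, ∑ a, p t s * σ s a * G.P s a s') - (∑ s, ∑ a, p' t s * σ' s a * G.P s a s') = _
      rw [← Finset.sum_sub_distrib]
      apply Finset.sum_congr rfl; intro s _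
      rw [← Finset.sum_sub_distrib]
      apply Finset.sum_congr rfl; intro a _
      ring
    calc d (t+1) = ∑ s', |∑ s, ∑ a, (p t s * σ s a - p' t s * σ' s a) * G.P s a s'| := by
          apply Finset.sum_congr rfl; intro s' _; rw [hrw s']
      _ ≤ ∑ s', ∑ s, ∑ a, |p t s * σ s a - p' t s * σ' s a| * G.P s a s' := by
          apply Finset.sum_le_sum; intro s' _
          calc |∑ s, ∑ a, (p t s * σ s a - p' t s * σ' s a) * G.P s a s'|
              ≤ ∑ s, |∑ a, (p t s * σ s a - p' t s * σ' s a) * G.P s a s'| :=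
                Finset.abs_sum_le_sum_abs _ _
            _ ≤ ∑ s, ∑ a, |p t s * σ s a - p' t s * σ' s a| * G.P s a s' := by
                apply Finset.sum_le_sum; intro s _
                calc |∑ a, (p t s * σ s a - p' t s * σ' s a) * G.P s a s'|
                    ≤ ∑ a, |(p t s * σ s a - p' t s * σ' s a) * G.P s a s'| :=
                      Finset.abs_sum_le_sum_abs _ _
                  _ = ∑ a, |p t s * σ s a - p' t s * σ' s a| * G.P s a s' := by
                      apply Finset.sum_congr rfl; intro a _
                      rw [abs_mul, abs_of_nonneg ((hG.2.2.2.2.1 s a).1 s')]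
      _ = ∑ s, ∑ a, |p t s * σ s a - p' t s * σ' s a| * (∑ s', G.P s a s') := by
          rw [Finset.sum_comm]
          apply Finset.sum_congr rfl; intro s _
          rw [Finset.sum_comm]
          apply Finset.sum_congr rfl; intro a _
          rw [Finset.mul_sum]
      _ = Am t := by
          apply Finset.sum_congr rfl; intro s _
          apply Finset.sum_congr rfl; intro a _
          rw [(hG.2.2.2.2.1 s a).2, mul_one]
  have d0 : d 0 = 0 := by
    apply Finset.sum_eq_zero; intro s _
    show |stateDist G σ 0 s - stateDist G σ' 0 s| = 0
    simp [stateDist]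
  have dbound : ∀ t, d t ≤ ∑ k ∈ Finset.range t, e k := by
    intro t
    induction t with
    | zero => simp [d0]
    | succ t ih =>
      calc d (t+1) ≤ Am t := claimB t
        _ ≤ d t + e t := claimA t
        _ ≤ (∑ k ∈ Finset.range t, e k) + e t := by linarith
        _ = ∑ k ∈ Finset.range (t+1), e k := (Finset.sum_range_succ e t).symm
  have Abound : ∀ t, Am t ≤ ∑ k ∈ Finset.range (t+1), e k := by
    intro t
    calc Am t ≤ d t + e t := claimA t
      _ ≤ (∑ k ∈ Finset.range t, e k) + e t := by linarith [dbound t]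
      _ = ∑ k ∈ Finset.range (t+1), e k := (Finset.sum_range_succ e t).symm
  -- summability facts
  have hsume : Summable (fun k => γ ^ k * e k) := by
    refine summable_of_bound G hG 2 (fun k => mul_nonneg (pow_nonneg hγ0 k) (he0 k)) (fun k => ?_)
    calc γ ^ k * e k ≤ γ ^ k * 2 := mul_le_mul_of_nonneg_left (he2 k) (pow_nonneg hγ0 k)
      _ = 2 * γ ^ k := by ring
  have hgeo : ∀ k N : ℕ, ∑ t ∈ Finset.Ico k N, γ ^ t ≤ γ ^ k / (1 - γ) := by
    intro k N
    rw [Finset.sum_Ico_eq_sum_range]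
    have : ∀ j, γ ^ (k + j) = γ ^ k * γ ^ j := fun j => pow_add γ k j
    rw [Finset.sum_congr rfl fun j _ => this j, ← Finset.mul_sum]
    rw [div_eq_mul_inv]
    apply mul_le_mul_of_nonneg_left _ (pow_nonneg hγ0 k)
    calc ∑ j ∈ Finset.range (N - k), γ ^ j ≤ ∑' j : ℕ, γ ^ j :=
          Summable.sum_le_tsum _ (fun j _ => pow_nonneg hγ0 j) (summable_geometric_of_lt_one hγ0 hγ1)
      _ = (1 - γ)⁻¹ := tsum_geometric_of_lt_one hγ0 hγ1
  -- the finite inequality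
  have finlem : ∀ N : ℕ, ∑ t ∈ Finset.range N, γ ^ t * Am t
      ≤ (1 / (1 - γ)) * ∑' k, γ ^ k * e k := by
    intro N
    have step1 : ∑ t ∈ Finset.range N, γ ^ t * Am t
        ≤ ∑ t ∈ Finset.range N, ∑ k ∈ Finset.range N, (if k ≤ t then γ ^ t * e k else 0) := by
      apply Finset.sum_le_sum; intro t ht
      rw [Finset.mem_range] at ht
      have h2 : ∑ k ∈ Finset.range N, (if k ≤ t then γ ^ t * e k else 0)
          = ∑ k ∈ Finset.range (t+1), γ ^ t * e k := by
        rw [Finset.sum_ite, Finset.sum_const_zero, add_zero]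
        apply Finset.sum_congr _ (fun k _ => rfl)
        ext k
        simp only [Finset.mem_filter, Finset.mem_range, Nat.lt_succ_iff]
        omega
      rw [h2, ← Finset.mul_sum]
      exact mul_le_mul_of_nonneg_left (Abound t) (pow_nonneg hγ0 t)
    have step2 : ∑ t ∈ Finset.range N, ∑ k ∈ Finset.range N, (if k ≤ t then γ ^ t * e k else 0)
        = ∑ k ∈ Finset.range N, (∑ t ∈ Finset.Ico k N, γ ^ t) * e k := by
      rw [Finset.sum_comm]
      apply Finset.sum_congr rfl; intro k _
      rw [Finset.sum_ite, Finset.sum_const_zero, add_zero, Finset.sum_mul]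
      apply Finset.sum_congr _ (fun t _ => rfl)
      ext t
      simp only [Finset.mem_filter, Finset.mem_range, Finset.mem_Ico]
      omega
    have step3 : ∑ k ∈ Finset.range N, (∑ t ∈ Finset.Ico k N, γ ^ t) * e k
        ≤ ∑ k ∈ Finset.range N, (1 / (1 - γ)) * (γ ^ k * e k) := by
      apply Finset.sum_le_sum; intro k _
      have : (1 / (1 - γ)) * (γ ^ k * e k) = (γ ^ k / (1 - γ)) * e k := by ring
      rw [this]
      exact mul_le_mul_of_nonneg_right (hgeo k N) (he0 k)
    have step4 : ∑ k ∈ Finset.range N, (1 / (1 - γ)) * (γ ^ k * e k)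
        ≤ (1 / (1 - γ)) * ∑' k, γ ^ k * e k := by
      rw [← Finset.mul_sum]
      apply mul_le_mul_of_nonneg_left _ (by positivity)
      exact Summable.sum_le_tsum _ (fun k _ => mul_nonneg (pow_nonneg hγ0 k) (he0 k)) hsume
    linarith
  have tsumA : ∑' t, γ ^ t * Am t ≤ (1 / (1 - γ)) * ∑' k, γ ^ k * e k := by
    apply tsum_le_of_sum_le' (mul_nonneg (by positivity) (tsum_nonneg fun k =>
      mul_nonneg (pow_nonneg hγ0 k) (he0 k)))
    intro F
    obtain ⟨N, hN⟩ := F.exists_nat_subset_range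
    calc ∑ t ∈ F, γ ^ t * Am t ≤ ∑ t ∈ Finset.range N, γ ^ t * Am t :=
          Finset.sum_le_sum_of_subset_of_nonneg hN (fun t _ _ =>
            mul_nonneg (pow_nonneg hγ0 t) (hA0 t))
      _ ≤ _ := finlem N
  -- now relate LHS and RHS to the tsums
  have hrhs : ∑ s, occ G σ' s * eps s = (1 - γ) * ∑' t, γ ^ t * e t := by
    have : ∀ s : S, occ G σ' s * eps s = (1 - γ) * ∑' t, γ ^ t * p' t s * eps s := by
      intro s
      show (1 - γ) * (∑' t, γ ^ t * p' t s) * eps s = _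
      rw [mul_assoc, ← tsum_mul_right]
    rw [Finset.sum_congr rfl fun s _ => this s, ← Finset.mul_sum]
    congr 1
    rw [← Summable.tsum_finsetSum (fun s _ => ((summable_sd G hG hσ' s).mul_right (eps s)))]
    apply tsum_congr; intro t
    rw [he]
    show ∑ s, γ ^ t * p' t s * eps s = γ ^ t * ∑ s, p' t s * eps s
    rw [Finset.mul_sum]
    exact Finset.sum_congr rfl fun s _ => by ring
  have hpol1 : ∀ s a, σ s a ≤ 1 := by
    intro s a
    calc σ s a ≤ ∑ b, σ s b := Finset.single_le_sum (fun b _ => hσ.1 s b) (Finset.mem_univ a)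
      _ = 1 := hσ.2 s
  have hpol1' : ∀ s a, σ' s a ≤ 1 := by
    intro s a
    calc σ' s a ≤ ∑ b, σ' s b := Finset.single_le_sum (fun b _ => hσ'.1 s b) (Finset.mem_univ a)
      _ = 1 := hσ'.2 s
  have hFsummable : ∀ s a, Summable (fun t => |γ ^ t * (p t s * σ s a - p' t s * σ' s a)|) := by
    intro s a
    refine summable_of_bound G hG 2 (fun t => abs_nonneg _) (fun t => ?_)
    rw [abs_mul, abs_pow, abs_of_nonneg hγ0]
    have h1 : |p t s * σ s a - p' t s * σ' s a| ≤ 2 := by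
      have hb1 : p t s * σ s a ≤ 1 :=
        mul_le_one₀ (hp1 t s) (hσ.1 s a) (hpol1 s a)
      have hb2 : p' t s * σ' s a ≤ 1 :=
        mul_le_one₀ (hp1' t s) (hσ'.1 s a) (hpol1' s a)
      have hc1 : 0 ≤ p t s * σ s a := mul_nonneg (hpn t s) (hσ.1 s a)
      have hc2 : 0 ≤ p' t s * σ' s a := mul_nonneg (hpn' t s) (hσ'.1 s a)
      rw [abs_sub_le_iff]
      constructor <;> linarith
    rw [hγdef]
    calc G.γ ^ t * |p t s * σ s a - p' t s * σ' s a| ≤ G.γ ^ t * 2 :=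
          mul_le_mul_of_nonneg_left h1 (pow_nonneg hG.1 t)
      _ = 2 * G.γ ^ t := by ring
  have hlhs : ∑ s, ∑ a, |saOcc G σ s a - saOcc G σ' s a|
      ≤ (1 - γ) * ∑' t, γ ^ t * Am t := by
    have hdiff : ∀ s a, saOcc G σ s a - saOcc G σ' s a
        = (1 - γ) * ∑' t, γ ^ t * (p t s * σ s a - p' t s * σ' s a) := by
      intro s a
      show occ G σ s * σ s a - occ G σ' s * σ' s a = _
      have h1 : occ G σ s * σ s a = (1 - γ) * ∑' t, γ ^ t * p t s * σ s a := by
        show (1 - γ) * (∑' t, γ ^ t * p t s) * σ s a = _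
        rw [mul_assoc, ← tsum_mul_right]
      have h2 : occ G σ' s * σ' s a = (1 - γ) * ∑' t, γ ^ t * p' t s * σ' s a := by
        show (1 - γ) * (∑' t, γ ^ t * p' t s) * σ' s a = _
        rw [mul_assoc, ← tsum_mul_right]
      rw [h1, h2, ← mul_sub]
      congr 1
      rw [← Summable.tsum_sub ((summable_sd G hG hσ s).mul_right (σ s a))
        ((summable_sd G hG hσ' s).mul_right (σ' s a))]
      apply tsum_congr; intro t; ring
    have hper : ∀ s a, |saOcc G σ s a - saOcc G σ' s a|
        ≤ (1 - γ) * ∑' t, |γ ^ t * (p t s * σ s a - p' t s * σ' s a)| := by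
      intro s a
      rw [hdiff s a, abs_mul, abs_of_nonneg (le_of_lt h1γ)]
      apply mul_le_mul_of_nonneg_left _ (le_of_lt h1γ)
      calc |∑' t, γ ^ t * (p t s * σ s a - p' t s * σ' s a)|
          = ‖∑' t, γ ^ t * (p t s * σ s a - p' t s * σ' s a)‖ := rfl
        _ ≤ ∑' t, ‖γ ^ t * (p t s * σ s a - p' t s * σ' s a)‖ :=
            norm_tsum_le_tsum_norm (hFsummable s a)
        _ = ∑' t, |γ ^ t * (p t s * σ s a - p' t s * σ' s a)| := rfl
    calc ∑ s, ∑ a, |saOcc G σ s a - saOcc G σ' s a|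
        ≤ ∑ s, ∑ a, (1 - γ) * ∑' t, |γ ^ t * (p t s * σ s a - p' t s * σ' s a)| :=
          Finset.sum_le_sum fun s _ => Finset.sum_le_sum fun a _ => hper s a
      _ = (1 - γ) * ∑ s, ∑ a, ∑' t, |γ ^ t * (p t s * σ s a - p' t s * σ' s a)| := by
          rw [Finset.mul_sum]
          exact Finset.sum_congr rfl fun s _ => (Finset.mul_sum _ _ _).symm
      _ = (1 - γ) * ∑' t, γ ^ t * Am t := by
          congr 1
          have hswap1 : ∀ s : S, ∑ a, ∑' t, |γ ^ t * (p t s * σ s a - p' t s * σ' s a)|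
              = ∑' t, ∑ a, |γ ^ t * (p t s * σ s a - p' t s * σ' s a)| :=
            fun s => (Summable.tsum_finsetSum (fun a _ => hFsummable s a)).symm
          rw [Finset.sum_congr rfl fun s _ => hswap1 s]
          rw [← Summable.tsum_finsetSum (fun s _ => summable_sum (fun a _ => hFsummable s a))]
          apply tsum_congr; intro t
          rw [Finset.mul_sum]
          apply Finset.sum_congr rfl; intro s _
          rw [Finset.mul_sum]
          apply Finset.sum_congr rfl; intro a _
          rw [abs_mul, abs_pow, abs_of_nonneg hγ0]
    done
  calc ∑ s, ∑ a, |saOcc G σ s a - saOcc G σ' s a|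
      ≤ (1 - γ) * ∑' t, γ ^ t * Am t := hlhs
    _ ≤ (1 - γ) * ((1 / (1 - γ)) * ∑' k, γ ^ k * e k) :=
        mul_le_mul_of_nonneg_left tsumA (le_of_lt h1γ)
    _ = (1 / (1 - γ)) * ((1 - γ) * ∑' k, γ ^ k * e k) := by ring
    _ = (1 / (1 - γ)) * ∑ s, occ G σ' s * eps s := by rw [hrhs]

end MAIL
namespace MAIL
set_option linter.unusedSectionVars false
set_option maxHeartbeats 1000000
variable {n : ℕ} {S : Type} {A : Fin n → Type} [Fintype S] [∀ i, Fintype (A i)]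
variable (G : Game n S A)

lemma value_close (hG : IsGame G) (i : Fin n) (σ σ' : S → (∀ i, A i) → ℝ)
    (hσ : IsPol σ) (hσ' : IsPol σ') :
    |value G i σ - value G i σ'| ≤
      (1 / (1 - G.γ) ^ 2) * ∑ s, occ G σ' s * ∑ a, |σ s a - σ' s a| := by
  have h1γ : 0 < 1 - G.γ := by linarith [hG.2.1]
  have step1 : |value G i σ - value G i σ'|
      ≤ (1 / (1 - G.γ)) * ∑ s, ∑ a, |saOcc G σ s a - saOcc G σ' s a| := by
    show |(1 / (1 - G.γ)) * (∑ s, ∑ a, saOcc G σ s a * G.r i s a)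
        - (1 / (1 - G.γ)) * (∑ s, ∑ a, saOcc G σ' s a * G.r i s a)| ≤ _
    rw [← mul_sub, abs_mul, abs_of_nonneg (by positivity : (0:ℝ) ≤ 1 / (1 - G.γ))]
    apply mul_le_mul_of_nonneg_left _ (by positivity)
    rw [← Finset.sum_sub_distrib]
    calc |∑ s, ((∑ a, saOcc G σ s a * G.r i s a) - ∑ a, saOcc G σ' s a * G.r i s a)|
        ≤ ∑ s, |(∑ a, saOcc G σ s a * G.r i s a) - ∑ a, saOcc G σ' s a * G.r i s a| :=
          Finset.abs_sum_le_sum_abs _ _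
      _ ≤ ∑ s, ∑ a, |saOcc G σ s a - saOcc G σ' s a| := ?_
    apply Finset.sum_le_sum; intro s _
    rw [← Finset.sum_sub_distrib]
    calc |∑ a, (saOcc G σ s a * G.r i s a - saOcc G σ' s a * G.r i s a)|
        ≤ ∑ a, |saOcc G σ s a * G.r i s a - saOcc G σ' s a * G.r i s a| :=
          Finset.abs_sum_le_sum_abs _ _
      _ ≤ ∑ a, |saOcc G σ s a - saOcc G σ' s a| := ?_
    apply Finset.sum_le_sum; intro a _
    have heq : saOcc G σ s a * G.r i s a - saOcc G σ' s a * G.r i s a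
        = (saOcc G σ s a - saOcc G σ' s a) * G.r i s a := by ring
    rw [heq]
    calc |(saOcc G σ s a - saOcc G σ' s a) * G.r i s a|
        = |saOcc G σ s a - saOcc G σ' s a| * |G.r i s a| := abs_mul _ _
      _ ≤ |saOcc G σ s a - saOcc G σ' s a| * 1 :=
          mul_le_mul_of_nonneg_left (hG.2.2.2.2.2 i s a) (abs_nonneg _)
      _ = |saOcc G σ s a - saOcc G σ' s a| := mul_one _
  have step2 := occ_diff G hG σ σ' hσ hσ'
  calc |value G i σ - value G i σ'|
      ≤ (1 / (1 - G.γ)) * ∑ s, ∑ a, |saOcc G σ s a - saOcc G σ' s a| := step1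
    _ ≤ (1 / (1 - G.γ)) * ((1 / (1 - G.γ)) * ∑ s, occ G σ' s * ∑ a, |σ s a - σ' s a|) :=
        mul_le_mul_of_nonneg_left step2 (by positivity)
    _ = (1 / (1 - G.γ) ^ 2) * ∑ s, occ G σ' s * ∑ a, |σ s a - σ' s a| := by
        rw [← mul_assoc]; congr 1; field_simp

lemma tv_prod (π π' : ∀ i, S → A i → ℝ) (hπ : ∀ i, IsPol (π i)) (hπ' : ∀ i, IsPol (π' i))
    (s : S) :
    ∑ a : ∀ i, A i, |joint π s a - joint π' s a| ≤ ∑ i, ∑ b, |π i s b - π' i s b| := by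
  classical
  set hyb : ℕ → ∀ j, S → A j → ℝ := fun k j => if (j : ℕ) < k then π' j else π j with hhyb
  have hyb0 : hyb 0 = π := by
    funext j; simp [hhyb]
  have hybn : hyb n = π' := by
    funext j; simp [hhyb, j.isLt]
  have hybpol : ∀ k j, IsPol (hyb k j) := by
    intro k j
    by_cases h : (j : ℕ) < k <;> simp [hhyb, h] <;> [exact hπ' j; exact hπ j]
  have key : ∀ k : ℕ, (hk : k < n) →
      ∑ a : ∀ i, A i, |joint (hyb k) s a - joint (hyb (k+1)) s a|
        ≤ ∑ b, |π ⟨k, hk⟩ s b - π' ⟨k, hk⟩ s b| := by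
    intro k hk
    set j₀ : Fin n := ⟨k, hk⟩ with hj₀
    have hagree : ∀ j : Fin n, j ≠ j₀ → hyb k j = hyb (k+1) j := by
      intro j hj
      have : (j : ℕ) ≠ k := fun h => hj (Fin.ext h)
      by_cases h : (j : ℕ) < k
      · simp [hhyb, h, Nat.lt_succ_of_lt h]
      · have h2 : ¬ (j : ℕ) < k + 1 := by omega
        simp [hhyb, h, h2]
    have hk0 : hyb k j₀ = π j₀ := by simp [hhyb, hj₀]
    have hk1 : hyb (k+1) j₀ = π' j₀ := by simp [hhyb, hj₀]
    set g : ∀ j, A j → ℝ :=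
      Function.update (fun j => hyb k j s) j₀ (fun b => |π j₀ s b - π' j₀ s b|) with hg
    have hgval : ∀ (a : ∀ i, A i),
        |joint (hyb k) s a - joint (hyb (k+1)) s a| = ∏ j, g j (a j) := by
      intro a
      have e1 : joint (hyb k) s a = hyb k j₀ s (a j₀) * ∏ j ∈ Finset.univ.erase j₀,
          hyb k j s (a j) := by
        rw [joint, ← Finset.mul_prod_erase Finset.univ _ (Finset.mem_univ j₀)]
      have e2 : joint (hyb (k+1)) s a = hyb (k+1) j₀ s (a j₀) * ∏ j ∈ Finset.univ.erase j₀,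
          hyb k j s (a j) := by
        rw [joint, ← Finset.mul_prod_erase Finset.univ _ (Finset.mem_univ j₀)]
        congr 1
        apply Finset.prod_congr rfl; intro j hj
        rw [hagree j (Finset.ne_of_mem_erase hj)]
      have e3 : ∏ j, g j (a j) = g j₀ (a j₀) * ∏ j ∈ Finset.univ.erase j₀, g j (a j) := by
        rw [← Finset.mul_prod_erase Finset.univ _ (Finset.mem_univ j₀)]
      rw [e1, e2, hk0, hk1, ← sub_mul, abs_mul, e3]
      congr 1
      · rw [hg, Function.update_self]
      · rw [abs_of_nonneg (Finset.prod_nonneg fun j hj => (hybpol k j).1 s (a j))]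
        apply Finset.prod_congr rfl; intro j hj
        rw [hg, Function.update_of_ne (Finset.ne_of_mem_erase hj)]
    refine le_of_eq ?_
    calc ∑ a : ∀ i, A i, |joint (hyb k) s a - joint (hyb (k+1)) s a|
        = ∑ a : ∀ i, A i, ∏ j, g j (a j) := Finset.sum_congr rfl fun a _ => hgval a
      _ = ∏ j, ∑ b, g j b := sum_joint g
      _ = (∑ b, g j₀ b) * ∏ j ∈ Finset.univ.erase j₀, ∑ b, g j b := by
          rw [← Finset.mul_prod_erase Finset.univ _ (Finset.mem_univ j₀)]
      _ = ∑ b, |π j₀ s b - π' j₀ s b| := by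
          have h1 : ∑ b, g j₀ b = ∑ b, |π j₀ s b - π' j₀ s b| := by
            apply Finset.sum_congr rfl; intro b _
            rw [hg, Function.update_self]
          have h2 : ∏ j ∈ Finset.univ.erase j₀, ∑ b, g j b = 1 := by
            apply Finset.prod_eq_one; intro j hj
            have : ∀ b, g j b = hyb k j s b := fun b => by
              rw [hg, Function.update_of_ne (Finset.ne_of_mem_erase hj)]
            rw [Finset.sum_congr rfl fun b _ => this b, (hybpol k j).2 s]
          rw [h1, h2, mul_one]
  -- telescoping
  have tele : ∑ a : ∀ i, A i, |joint π s a - joint π' s a|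
      ≤ ∑ k ∈ Finset.range n, ∑ a : ∀ i, A i, |joint (hyb k) s a - joint (hyb (k+1)) s a| := by
    rw [Finset.sum_comm]
    apply Finset.sum_le_sum; intro a _
    have : joint π s a - joint π' s a
        = ∑ k ∈ Finset.range n, (joint (hyb k) s a - joint (hyb (k+1)) s a) := by
      rw [Finset.sum_range_sub' (fun k => joint (hyb k) s a) n, hyb0, hybn]
    rw [this]
    exact Finset.abs_sum_le_sum_abs _ _
  calc ∑ a : ∀ i, A i, |joint π s a - joint π' s a|
      ≤ ∑ k ∈ Finset.range n, ∑ a : ∀ i, A i, |joint (hyb k) s a - joint (hyb (k+1)) s a| := tele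
    _ ≤ ∑ i, ∑ b, |π i s b - π' i s b| := by
        set f : ℕ → ℝ := fun k =>
          if h : k < n then ∑ b, |π ⟨k, h⟩ s b - π' ⟨k, h⟩ s b| else 0 with hf
        have hF : ∑ i, ∑ b, |π i s b - π' i s b| = ∑ k ∈ Finset.range n, f k := by
          rw [← Fin.sum_univ_eq_sum_range f n]
          apply Finset.sum_congr rfl; intro i _
          rw [hf]
          simp only [i.isLt, dif_pos, Fin.eta]
        rw [hF]
        apply Finset.sum_le_sum; intro k hk
        rw [Finset.mem_range] at hk
        have : f k = ∑ b, |π ⟨k, hk⟩ s b - π' ⟨k, hk⟩ s b| := by rw [hf]; exact dif_pos hk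
        rw [this]
        exact key k hk
end MAIL



namespace MAIL

/-- if the expert `π^E` is a weak Dominant Strategy Equilibrium
and the learned product policy `π` has behavioral cloning error at most
`ε_BC`, then `NashGap(π) ≤ 2 n ε_BC / (1-γ)²`. -/
theorem dse_nash_gap {n : ℕ} {S : Type} {A : Fin n → Type}
    [Fintype S] [∀ i, Fintype (A i)]
    (G : Game n S A) (hG : IsGame G)
    (πE π : ∀ i, S → A i → ℝ)
    (hE : ∀ i, IsPol (πE i)) (hπ : ∀ i, IsPol (π i))
    (hDSE : ∀ (i : Fin n) (ρ : ∀ j, S → A j → ℝ), (∀ j, IsPol (ρ j)) →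
      value G i (joint ρ) ≤ value G i (joint (dev ρ i (πE i))))
    (εBC : ℝ) (hBC : ∀ i, bcErr G πE π i ≤ εBC) :
    ∀ (i : Fin n) (πi' : S → A i → ℝ), IsPol πi' →
      value G i (joint (dev π i πi')) - value G i (joint π) ≤
        2 * n * εBC / (1 - G.γ) ^ 2 := by
  classical
  intro i πi' hπi'
  have hγ0 := hG.1
  have hγ1 := hG.2.1
  have h1γ : 0 < 1 - G.γ := by linarith
  have hEjoint : IsPol (joint πE) := jointIsPol hE
  have hoccE : ∀ s, 0 ≤ occ G (joint πE) s := occ_nonneg G hG hEjoint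
  have hdev : ∀ (ρi : S → A i → ℝ), IsPol ρi → ∀ j, IsPol (dev π i ρi j) := by
    intro ρi hρi j
    by_cases h : j = i
    · subst h; rw [dev, Function.update_self]; exact hρi
    · rw [dev, Function.update_of_ne h]; exact hπ j
  have master : ∀ (ρ : ∀ j, S → A j → ℝ), (∀ j, IsPol (ρ j)) →
      (∀ (j : Fin n) (s : S), ∑ b, |ρ j s b - πE j s b| ≤ ∑ b, |π j s b - πE j s b|) →
      |value G i (joint ρ) - value G i (joint πE)| ≤
        (1 / (1 - G.γ) ^ 2) * (n * εBC) := by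
    intro ρ hρ hcomp
    have h1 := value_close G hG i (joint ρ) (joint πE) (jointIsPol hρ) hEjoint
    have h2 : ∑ s, occ G (joint πE) s * ∑ a, |joint ρ s a - joint πE s a|
        ≤ ∑ j, bcErr G πE π j := by
      calc ∑ s, occ G (joint πE) s * ∑ a, |joint ρ s a - joint πE s a|
          ≤ ∑ s, occ G (joint πE) s * ∑ j, ∑ b, |π j s b - πE j s b| := by
            apply Finset.sum_le_sum; intro s _
            apply mul_le_mul_of_nonneg_left _ (hoccE s)
            calc ∑ a, |joint ρ s a - joint πE s a|
                ≤ ∑ j, ∑ b, |ρ j s b - πE j s b| := tv_prod ρ πE hρ hE s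
              _ ≤ ∑ j, ∑ b, |π j s b - πE j s b| :=
                  Finset.sum_le_sum fun j _ => hcomp j s
        _ = ∑ j, bcErr G πE π j := by
            rw [Finset.sum_congr rfl fun s _ => Finset.mul_sum _ _ _, Finset.sum_comm]
            rfl
    have h3 : ∑ j, bcErr G πE π j ≤ n * εBC := by
      have hε0 : 0 ≤ εBC := by
        refine le_trans ?_ (hBC i)
        exact Finset.sum_nonneg fun s _ => mul_nonneg (hoccE s)
          (Finset.sum_nonneg fun b _ => abs_nonneg _)
      calc ∑ j, bcErr G πE π j ≤ ∑ _j : Fin n, εBC :=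
            Finset.sum_le_sum fun j _ => hBC j
        _ = n * εBC := by
            rw [Finset.sum_const, Finset.card_univ, Fintype.card_fin, nsmul_eq_mul]
    calc |value G i (joint ρ) - value G i (joint πE)|
        ≤ (1 / (1 - G.γ) ^ 2) * ∑ s, occ G (joint πE) s * ∑ a, |joint ρ s a - joint πE s a| := h1
      _ ≤ (1 / (1 - G.γ) ^ 2) * (n * εBC) := by
          apply mul_le_mul_of_nonneg_left _ (by positivity)
          exact le_trans h2 h3
  -- Step 1: DSE
  have step1 : value G i (joint (dev π i πi')) ≤ value G i (joint (dev π i (πE i))) := by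
    have h := hDSE i (dev π i πi') (hdev πi' hπi')
    have heq : dev (dev π i πi') i (πE i) = dev π i (πE i) :=
      Function.update_idem _ _ _
    rwa [heq] at h
  -- Step 2: bound A
  have boundA : value G i (joint (dev π i (πE i))) - value G i (joint πE) ≤
      (1 / (1 - G.γ) ^ 2) * (n * εBC) := by
    refine le_trans (le_abs_self _) (master _ (hdev (πE i) (hE i)) ?_)
    intro j s
    by_cases h : j = i
    · subst h
      rw [dev, Function.update_self]
      calc ∑ b, |πE j s b - πE j s b| = 0 := by simp
        _ ≤ ∑ b, |π j s b - πE j s b| := Finset.sum_nonneg fun b _ => abs_nonneg _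
    · rw [dev, Function.update_of_ne h]
  -- Step 3: bound B
  have boundB : value G i (joint πE) - value G i (joint π) ≤
      (1 / (1 - G.γ) ^ 2) * (n * εBC) := by
    refine le_trans ?_ (master π hπ (fun j s => le_refl _))
    rw [abs_sub_comm]
    exact le_abs_self _
  have final : (1 / (1 - G.γ) ^ 2) * (n * εBC) + (1 / (1 - G.γ) ^ 2) * (n * εBC)
      = 2 * n * εBC / (1 - G.γ) ^ 2 := by
    field_simp
    ring
  linarith


end MAIL
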